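/- Let n, m, k, l ∈ ℕ. If there exists a symmetric intersecting family 𝒜 of k-element subsets of [n] and a symmetric intersecting family ℬ of l-element subsets of [m], then the tensor product 𝒜 ⊗ ℬ = {x ⊗ y : x ∈ 𝒜, y ∈ ℬ} is a symmetric intersecting family of kl-element subsets of [nm] with |𝒜 ⊗ ℬ| = |𝒜|·|ℬ|. Consequently, s(nm, kl) ≥ s(n,k)·s(m,l). -/

import Mathlib

open scoped Classical

/-- A family of finite sets is intersecting if any two of its members meet. -/
def IsIntersecting {α : Type*} [DecidableEq α] (A : Finset (Finset α)) : Prop :=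
  ∀ x ∈ A, ∀ y ∈ A, (x ∩ y).Nonempty

/-- A family of finite sets is symmetric if its automorphism group is transitive:
for all `i j` there is a permutation `σ` with `σ(𝒜) = 𝒜` and `σ i = j`. -/
def IsSymmetricFam {α : Type*} [DecidableEq α] (A : Finset (Finset α)) : Prop :=
  ∀ i j : α, ∃ σ : Equiv.Perm α, A.image (fun x => x.image σ) = A ∧ σ i = j

/-- `s(n,k)`: the maximum size of a symmetric intersecting family of `k`-element
subsets of `[n]`. -/
noncomputable def symIntMax (n k : ℕ) : ℕ :=
  sSup {m | ∃ A : Finset (Finset (Fin n)),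
    (∀ x ∈ A, x.card = k) ∧ IsSymmetricFam A ∧ IsIntersecting A ∧ A.card = m}

/-- The element of `[nm]` corresponding to the pair `(i, j) ∈ [n] × [m]`;
with 0-indexing, `(i, j) ↦ i·m + j` (i.e. `(i-1)m + j` with 1-indexing). -/
def tensorElem {n m : ℕ} (i : Fin n) (j : Fin m) : Fin (n * m) :=
  ⟨i.1 * m + j.1, by
    have hi := i.isLt
    have hj := j.isLt
    calc i.1 * m + j.1 < i.1 * m + m := by omega
      _ = (i.1 + 1) * m := by ring
      _ ≤ n * m := Nat.mul_le_mul_right m hi⟩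

/-- The tensor product `x ⊗ y ⊆ [nm]` of `x ⊆ [n]` and `y ⊆ [m]`:
`(i-1)m + j ∈ x ⊗ y` iff `i ∈ x` and `j ∈ y`. -/
def tensorFinset {n m : ℕ} (x : Finset (Fin n)) (y : Finset (Fin m)) :
    Finset (Fin (n * m)) :=
  (x ×ˢ y).image fun p => tensorElem p.1 p.2

/-- The tensor product `𝒜 ⊗ ℬ = {x ⊗ y : x ∈ 𝒜, y ∈ ℬ}` of two families. -/
def tensorFam {n m : ℕ} (A : Finset (Finset (Fin n))) (B : Finset (Finset (Fin m))) :
    Finset (Finset (Fin (n * m))) :=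
  (A ×ˢ B).image fun p => tensorFinset p.1 p.2

/-!
Identify `[n] × [m]` with `[nm]` via `(i, j) ↦ i·m + j`, so that `x ⊗ y` becomes the product
`x × y`. Then `(x ⊗ y) ∩ (x' ⊗ y') = (x ∩ x') ⊗ (y ∩ y')`, which gives the intersecting property,
and a pair of automorphisms `σ` of `𝒜`, `τ` of `ℬ` acts on `[n] × [m]` as an automorphism
`σ × τ` of `𝒜 ⊗ ℬ`, which gives transitivity. Members of an intersecting family are nonempty,
so `x ⊗ y` determines `x` and `y`, whence `|𝒜 ⊗ ℬ| = |𝒜||ℬ|`. Tensoring extremal families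
yields the bound on `s`.
-/

open Finset

lemma IsIntersecting.nonempty_of_mem {α : Type*} [DecidableEq α] {F : Finset (Finset α)}
    (hF : IsIntersecting F) {x : Finset α} (hx : x ∈ F) : x.Nonempty := by
  simpa using hF x hx x hx

lemma isSymmetricFam_empty {α : Type*} [DecidableEq α] :
    IsSymmetricFam (∅ : Finset (Finset α)) :=
  fun i j => ⟨Equiv.swap i j, by simp, Equiv.swap_apply_left i j⟩

section Tensor

variable {n m k l : ℕ}

lemma tensorElem_eq_finProdFinEquiv (i : Fin n) (j : Fin m) :
    tensorElem i j = finProdFinEquiv (i, j) :=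
  Fin.ext <| by simp [tensorElem, Nat.mul_comm, Nat.add_comm]

lemma tensorFinset_eq_map (x : Finset (Fin n)) (y : Finset (Fin m)) :
    tensorFinset x y = (x ×ˢ y).map finProdFinEquiv.toEmbedding := by
  simp [tensorFinset, map_eq_image, tensorElem_eq_finProdFinEquiv]

lemma card_tensorFinset (x : Finset (Fin n)) (y : Finset (Fin m)) :
    (tensorFinset x y).card = x.card * y.card := by
  rw [tensorFinset_eq_map, card_map, card_product]

lemma tensorFinset_inter (x x' : Finset (Fin n)) (y y' : Finset (Fin m)) :
    tensorFinset x y ∩ tensorFinset x' y' = tensorFinset (x ∩ x') (y ∩ y') := by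
  simp only [tensorFinset_eq_map, ← map_inter, product_inter_product]

lemma tensorFinset_nonempty {x : Finset (Fin n)} {y : Finset (Fin m)}
    (hx : x.Nonempty) (hy : y.Nonempty) : (tensorFinset x y).Nonempty := by
  rw [tensorFinset_eq_map]
  exact (hx.product hy).map

lemma eq_and_eq_of_tensorFinset_eq {x x' : Finset (Fin n)} {y y' : Finset (Fin m)}
    (hx : x.Nonempty) (hy : y.Nonempty) (hx' : x'.Nonempty) (hy' : y'.Nonempty)
    (h : tensorFinset x y = tensorFinset x' y') : x = x' ∧ y = y' := by
  simp only [tensorFinset_eq_map, map_inj] at h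
  constructor
  · rw [← product_image_fst (s := x) hy, ← product_image_fst (s := x') hy', h]
  · rw [← product_image_snd (t := y) hx, ← product_image_snd (t := y') hx', h]

lemma image_tensorFinset (σ : Equiv.Perm (Fin n)) (τ : Equiv.Perm (Fin m))
    (x : Finset (Fin n)) (y : Finset (Fin m)) :
    (tensorFinset x y).image (finProdFinEquiv.permCongr (σ.prodCongr τ))
      = tensorFinset (x.image σ) (y.image τ) := by
  simp only [tensorFinset, image_image, ← prodMap_image_product]
  refine image_congr fun p _ => ?_
  simp [tensorElem_eq_finProdFinEquiv]

variable {A : Finset (Finset (Fin n))} {B : Finset (Finset (Fin m))}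

lemma image_tensorFam (σ : Equiv.Perm (Fin n)) (τ : Equiv.Perm (Fin m)) :
    (tensorFam A B).image (fun z => z.image (finProdFinEquiv.permCongr (σ.prodCongr τ)))
      = tensorFam (A.image fun x => x.image σ) (B.image fun y => y.image τ) := by
  simp only [tensorFam, image_image, ← prodMap_image_product]
  exact image_congr fun p _ => image_tensorFinset σ τ p.1 p.2

lemma mem_tensorFam {z : Finset (Fin (n * m))} :
    z ∈ tensorFam A B ↔ ∃ x ∈ A, ∃ y ∈ B, tensorFinset x y = z := by
  simp [tensorFam, and_assoc]

lemma card_of_mem_tensorFam (hA : ∀ x ∈ A, x.card = k) (hB : ∀ y ∈ B, y.card = l) :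
    ∀ z ∈ tensorFam A B, z.card = k * l := by
  simp only [mem_tensorFam]
  rintro _ ⟨x, hx, y, hy, rfl⟩
  rw [card_tensorFinset, hA x hx, hB y hy]

lemma IsIntersecting.tensorFam (hA : IsIntersecting A) (hB : IsIntersecting B) :
    IsIntersecting (tensorFam A B) := by
  simp only [IsIntersecting, mem_tensorFam]
  rintro _ ⟨x, hx, y, hy, rfl⟩ _ ⟨x', hx', y', hy', rfl⟩
  rw [tensorFinset_inter]
  exact tensorFinset_nonempty (hA x hx x' hx') (hB y hy y' hy')

lemma IsSymmetricFam.tensorFam (hA : IsSymmetricFam A) (hB : IsSymmetricFam B) :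
    IsSymmetricFam (tensorFam A B) := by
  intro i j
  obtain ⟨⟨a, b⟩, rfl⟩ := finProdFinEquiv.surjective i
  obtain ⟨⟨a', b'⟩, rfl⟩ := finProdFinEquiv.surjective j
  obtain ⟨σ, hσA, hσ⟩ := hA a a'
  obtain ⟨τ, hτB, hτ⟩ := hB b b'
  refine ⟨finProdFinEquiv.permCongr (σ.prodCongr τ), ?_, ?_⟩
  · rw [image_tensorFam, hσA, hτB]
  · simp [hσ, hτ]

lemma card_tensorFam (hA : IsIntersecting A) (hB : IsIntersecting B) :
    (tensorFam A B).card = A.card * B.card := by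
  rw [tensorFam, card_image_of_injOn, card_product]
  rintro ⟨x, y⟩ hxy ⟨x', y'⟩ hxy' h
  simp only [coe_product, Set.mem_prod, mem_coe] at hxy hxy'
  obtain ⟨rfl, rfl⟩ := eq_and_eq_of_tensorFinset_eq (hA.nonempty_of_mem hxy.1)
    (hB.nonempty_of_mem hxy.2) (hA.nonempty_of_mem hxy'.1) (hB.nonempty_of_mem hxy'.2) h
  rfl

end Tensor

lemma bddAbove_symIntMax_set (n k : ℕ) :
    BddAbove {c | ∃ A : Finset (Finset (Fin n)),
      (∀ x ∈ A, x.card = k) ∧ IsSymmetricFam A ∧ IsIntersecting A ∧ A.card = c} :=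
  ⟨Fintype.card (Finset (Fin n)), by rintro _ ⟨A, -, -, -, rfl⟩; exact card_le_univ A⟩

lemma exists_card_eq_symIntMax (n k : ℕ) : ∃ A : Finset (Finset (Fin n)),
    (∀ x ∈ A, x.card = k) ∧ IsSymmetricFam A ∧ IsIntersecting A ∧ A.card = symIntMax n k := by
  refine Nat.sSup_mem ?_ (bddAbove_symIntMax_set n k)
  exact ⟨0, ∅, by simp, isSymmetricFam_empty, by simp [IsIntersecting], rfl⟩

lemma card_le_symIntMax {n k : ℕ} {A : Finset (Finset (Fin n))} (hAu : ∀ x ∈ A, x.card = k)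
    (hAs : IsSymmetricFam A) (hAi : IsIntersecting A) : A.card ≤ symIntMax n k :=
  le_csSup (bddAbove_symIntMax_set n k) ⟨A, hAu, hAs, hAi, rfl⟩

/-- If `𝒜` is a symmetric intersecting family of `k`-subsets of `[n]` and `ℬ` one of
`l`-subsets of `[m]`, then `𝒜 ⊗ ℬ` is a symmetric intersecting family of `kl`-subsets
of `[nm]` with `|𝒜 ⊗ ℬ| = |𝒜||ℬ|`; consequently `s(nm, kl) ≥ s(n,k)·s(m,l)`. -/
theorem tensor_product_symmetric_intersecting (n m k l : ℕ)
    (A : Finset (Finset (Fin n))) (hAu : ∀ x ∈ A, x.card = k)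
    (hAs : IsSymmetricFam A) (hAi : IsIntersecting A)
    (B : Finset (Finset (Fin m))) (hBu : ∀ y ∈ B, y.card = l)
    (hBs : IsSymmetricFam B) (hBi : IsIntersecting B) :
    (∀ z ∈ tensorFam A B, z.card = k * l) ∧
    IsSymmetricFam (tensorFam A B) ∧
    IsIntersecting (tensorFam A B) ∧
    (tensorFam A B).card = A.card * B.card ∧
    symIntMax n k * symIntMax m l ≤ symIntMax (n * m) (k * l) := by
  refine ⟨card_of_mem_tensorFam hAu hBu, hAs.tensorFam hBs, hAi.tensorFam hBi,
    card_tensorFam hAi hBi, ?_⟩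
  obtain ⟨A₀, hA₀u, hA₀s, hA₀i, hA₀⟩ := exists_card_eq_symIntMax n k
  obtain ⟨B₀, hB₀u, hB₀s, hB₀i, hB₀⟩ := exists_card_eq_symIntMax m l
  rw [← hA₀, ← hB₀, ← card_tensorFam hA₀i hB₀i]
  exact card_le_symIntMax (card_of_mem_tensorFam hA₀u hB₀u) (hA₀s.tensorFam hB₀s)
    (hA₀i.tensorFam hB₀i)
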